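/- Let K be a field and consider the equation (1 - x_0)u = (1 - x_1)v in the monoid ring K[M] of Thompson's monoid. Define u_0 = (1 + x_0 - x_1)(1 - x_3) and u_k = (1 - x_1)φ(u_{k-1}) for k ≥ 1, where φ is the shift endomorphism. Then for any solution (u, v) in K[M], the element u can be written as u = u_0 r_0 + u_1 r_1 + ... + u_k r_k for some k and some r_i ∈ K[M_i] (0 ≤ i ≤ k). -/

import Mathlib

/-- The defining relation of Thompson's monoid: `x_j x_i = x_i x_{j+1}` for `i < j`. -/
def thompsonRel : FreeMonoid ℕ → FreeMonoid ℕ → Prop := fun a b =>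
  ∃ i j : ℕ, i < j ∧ a = FreeMonoid.of j * FreeMonoid.of i ∧
    b = FreeMonoid.of i * FreeMonoid.of (j + 1)

/-- The congruence on the free monoid generated by the Thompson relations. -/
def thompsonCon : Con (FreeMonoid ℕ) := conGen thompsonRel

/-- Thompson's monoid `M`. -/
abbrev ThompsonM := thompsonCon.Quotient

/-- The generators `x_n` of Thompson's monoid. -/
def xM (n : ℕ) : ThompsonM := thompsonCon.mk' (FreeMonoid.of n)

/-- The shift endomorphism `φ : M → M`, `x_i ↦ x_{i+1}`. -/
def shiftM : ThompsonM →* ThompsonM :=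
  Con.lift _ ((Con.mk' thompsonCon).comp (FreeMonoid.map Nat.succ)) (by
    apply Con.conGen_le.2
    rintro a b ⟨i, j, hij, rfl, rfl⟩
    simp only [Con.ker_rel, MonoidHom.comp_apply, map_mul, FreeMonoid.map_of]
    exact Con.eq _ |>.2 (ConGen.Rel.of _ _ ⟨i + 1, j + 1, by omega, rfl, rfl⟩))

/-- The relators of Thompson's group `F` (infinite presentation). -/
def thompsonRels : Set (FreeGroup ℕ) :=
  {w | ∃ i j : ℕ, i < j ∧
    w = FreeGroup.of j * FreeGroup.of i * (FreeGroup.of i * FreeGroup.of (j + 1))⁻¹}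

/-- Thompson's group `F`. -/
abbrev ThompsonF := PresentedGroup thompsonRels

/-- The generators `x_n` of Thompson's group. -/
def xF (n : ℕ) : ThompsonF := PresentedGroup.of n

/-- Word length, as a monoid homomorphism on the free monoid. -/
def lenHom : FreeMonoid ℕ →* Multiplicative ℕ where
  toFun w := Multiplicative.ofAdd w.length
  map_one' := by simp
  map_mul' a b := by
    simp [FreeMonoid.length_mul, ofAdd_add]

/-- Length is well defined on Thompson's monoid. -/
def lenM : ThompsonM →* Multiplicative ℕ :=
  Con.lift _ lenHom (by
    apply Con.conGen_le.2
    rintro a b ⟨i, j, hij, rfl, rfl⟩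
    simp only [Con.ker_rel]
    show Multiplicative.ofAdd (FreeMonoid.of j * FreeMonoid.of i).length = Multiplicative.ofAdd (FreeMonoid.of i * FreeMonoid.of (j + 1)).length
    simp [FreeMonoid.length_mul])

/-- The length of an element of Thompson's monoid. -/
def mlen (g : ThompsonM) : ℕ := Multiplicative.toAdd (lenM g)

/-- The degree of an element of the monoid ring `K[M]`. -/
noncomputable def mdeg {K : Type*} [Field K] (a : MonoidAlgebra K ThompsonM) : ℕ :=
  a.coeff.support.sup mlen

/-- The submonoid `M_i` of `M` generated by `x_i, x_{i+1}, …`. -/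
def Msub (i : ℕ) : Submonoid ThompsonM :=
  Submonoid.closure {g | ∃ n : ℕ, i ≤ n ∧ g = xM n}

/-- The shift endomorphism of the monoid ring `K[M]` induced by `φ`. -/
noncomputable def shiftA (K : Type*) [Field K] :
    MonoidAlgebra K ThompsonM →+* MonoidAlgebra K ThompsonM :=
  MonoidAlgebra.mapDomainRingHom K shiftM

/-- The natural homomorphism of Thompson's monoid into Thompson's group. -/
def iotaMF : ThompsonM →* ThompsonF :=
  Con.lift _ (FreeMonoid.lift xF) (by
    apply Con.conGen_le.2
    rintro a b ⟨i, j, hij, rfl, rfl⟩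
    simp only [Con.ker_rel, map_mul, FreeMonoid.lift_eval_of]
    have h : (FreeGroup.of j * FreeGroup.of i *
        (FreeGroup.of i * FreeGroup.of (j + 1))⁻¹ : FreeGroup ℕ) ∈ thompsonRels :=
      ⟨i, j, hij, rfl⟩
    have h1 : PresentedGroup.mk thompsonRels
        (FreeGroup.of j * FreeGroup.of i * (FreeGroup.of i * FreeGroup.of (j + 1))⁻¹) = 1 := by
      exact (QuotientGroup.eq_one_iff _).2 (Subgroup.subset_normalClosure h)
    have := h1
    rw [map_mul, map_mul, map_inv, map_mul, mul_inv_eq_one] at this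
    simpa [xF, PresentedGroup.of] using this)

/-- The generator `x_n` as an element of the group ring `K[F]`. -/
noncomputable def XF (K : Type*) [Field K] (n : ℕ) : MonoidAlgebra K ThompsonF :=
  MonoidAlgebra.of K ThompsonF (xF n)

/-- The generator `x_n` as an element of the monoid ring `K[M]`. -/
noncomputable def XMa (K : Type*) [Field K] (n : ℕ) : MonoidAlgebra K ThompsonM :=
  MonoidAlgebra.of K ThompsonM (xM n)

/-!
Every element of `M` is uniquely `x_0 ^ a * φ p`, so `u ∈ K[M]` is determined by its components
`[u]_a`, where `x_0 ^ a φ([u]_a)` collects the monomials of `u` with exactly `a` leading `x_0`'s.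
Since `x_{k+1} x_0 ^ a = x_0 ^ a x_{a+k+1}`, left multiplication by `x_{k+1}` acts on `[·]_a` as
`x_{a+k}`, and `(1 - x_0) u = (1 - x_1) v` becomes `[u]_0 = (1 - x_0) [v]_0`,
`[u]_{a+1} - [u]_a = (1 - x_{a+1}) [v]_{a+1}`. A descending recursion produces `R` with
`[u - u_0 R]_a = 0` for `a > 0`; then `u - u_0 R = φ((1 - x_0) w) = (1 - x_1) φ(w)`, and since
`u_0` is itself a solution, so is `w`, of smaller length. Induction on the length concludes, as
`(1 - x_1) φ(u_k) = u_{k+1}`.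
-/

namespace ThompsonM

@[elab_as_elim]
theorem induction_on {motive : ThompsonM → Prop} (m : ThompsonM) (one : motive 1)
    (xM_mul : ∀ b m, motive m → motive (xM b * m)) : motive m := by
  induction m using Con.induction_on with
  | _ w =>
    induction w using FreeMonoid.inductionOn' with
    | one => exact one
    | of_mul b w ih => exact xM_mul b _ ih

theorem xM_mul_xM_of_lt {i j : ℕ} (h : i < j) : xM j * xM i = xM i * xM (j + 1) :=
  (Con.eq _).2 (ConGen.Rel.of _ _ ⟨i, j, h, rfl, rfl⟩)

@[simp]
theorem shiftM_xM (n : ℕ) : shiftM (xM n) = xM (n + 1) := rfl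

theorem xM_succ_mul_xM_zero_pow (k a : ℕ) :
    xM (k + 1) * xM 0 ^ a = xM 0 ^ a * xM (k + 1 + a) := by
  induction a generalizing k with
  | zero => simp
  | succ a ih =>
    rw [pow_succ', ← mul_assoc, xM_mul_xM_of_lt k.succ_pos, mul_assoc, ih, ← mul_assoc,
      ← pow_succ', add_right_comm, add_assoc]

theorem xM_succ_mul_xM_zero_pow_mul_shiftM (k a : ℕ) (p : ThompsonM) :
    xM (k + 1) * (xM 0 ^ a * shiftM p) = xM 0 ^ a * shiftM (xM (k + a) * p) := by
  rw [← mul_assoc, xM_succ_mul_xM_zero_pow, mul_assoc, map_mul, shiftM_xM, Nat.add_right_comm]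

/-- Left multiplication by `x_b` in the coordinates `(a, p) ↔ x_0 ^ a * φ p`. -/
def pushGen : ℕ → ℕ × ThompsonM → ℕ × ThompsonM
  | 0, (a, p) => (a + 1, p)
  | b + 1, (a, p) => (a, xM (b + a) * p)

theorem pushGen_pushGen_of_lt {i j : ℕ} (h : i < j) (s : ℕ × ThompsonM) :
    pushGen j (pushGen i s) = pushGen i (pushGen (j + 1) s) := by
  obtain ⟨a, p⟩ := s
  obtain ⟨⟩ | i := i <;> obtain ⟨⟩ | j := j
  · omega
  · simp only [pushGen, Prod.mk.injEq, true_and]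
    rw [add_right_comm, add_assoc]
  · omega
  · simp only [pushGen, Prod.mk.injEq, true_and, ← mul_assoc]
    rw [xM_mul_xM_of_lt (by omega : i + a < j + a), add_right_comm]

def pushHom : ThompsonM →* Function.End (ℕ × ThompsonM) :=
  Con.lift _ (FreeMonoid.lift fun b => (pushGen b : Function.End (ℕ × ThompsonM))) <| by
    refine Con.conGen_le.2 ?_
    rintro _ _ ⟨i, j, hij, rfl, rfl⟩
    simp only [Con.ker_rel, map_mul]
    exact funext (pushGen_pushGen_of_lt hij)

def decomp (m : ThompsonM) : ℕ × ThompsonM := pushHom m (0, 1)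

theorem decomp_xM_mul (b : ℕ) (m : ThompsonM) : decomp (xM b * m) = pushGen b (decomp m) := by
  simp only [decomp, map_mul, Function.End.mul_def]
  rfl

theorem decomp_one : decomp 1 = (0, 1) := rfl

theorem xM_zero_pow_mul_shiftM_decomp (m : ThompsonM) :
    xM 0 ^ (decomp m).1 * shiftM (decomp m).2 = m := by
  induction m using induction_on with
  | one => simp [decomp_one]
  | xM_mul b m ih =>
    rcases hm : decomp m with ⟨a, p⟩
    rw [hm] at ih
    obtain ⟨⟩ | b := b <;> rw [decomp_xM_mul, hm] <;> dsimp only [pushGen]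
    · rw [pow_succ', mul_assoc, ih]
    · rw [← xM_succ_mul_xM_zero_pow_mul_shiftM, ih]

theorem decomp_shiftM (p : ThompsonM) : decomp (shiftM p) = (0, p) := by
  induction p using induction_on with
  | one => rw [map_one, decomp_one]
  | xM_mul b p ih => rw [map_mul, shiftM_xM, decomp_xM_mul, ih, pushGen, add_zero]

theorem decomp_xM_zero_pow_mul_shiftM (a : ℕ) (p : ThompsonM) :
    decomp (xM 0 ^ a * shiftM p) = (a, p) := by
  induction a with
  | zero => rw [pow_zero, one_mul, decomp_shiftM]
  | succ a ih => rw [pow_succ', mul_assoc, decomp_xM_mul, ih, pushGen]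

theorem exists_eq_xM_zero_pow_mul_shiftM (m : ThompsonM) :
    ∃ a p, m = xM 0 ^ a * shiftM p :=
  ⟨_, _, (xM_zero_pow_mul_shiftM_decomp m).symm⟩

theorem xM_zero_pow_mul_shiftM_inj {a a' : ℕ} {p p' : ThompsonM} :
    xM 0 ^ a * shiftM p = xM 0 ^ a' * shiftM p' ↔ a = a' ∧ p = p' := by
  refine ⟨fun h => ?_, fun ⟨ha, hp⟩ => ha ▸ hp ▸ rfl⟩
  simpa only [decomp_xM_zero_pow_mul_shiftM, Prod.mk.injEq] using congrArg decomp h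

theorem xM_zero_pow_mul_shiftM_injective (a : ℕ) :
    Function.Injective fun p => xM 0 ^ a * shiftM p :=
  fun _ _ h => (xM_zero_pow_mul_shiftM_inj.1 h).2

@[simp]
theorem mlen_xM (n : ℕ) : mlen (xM n) = 1 := rfl

@[simp]
theorem mlen_mul (m m' : ThompsonM) : mlen (m * m') = mlen m + mlen m' := by
  simp [mlen]

@[simp]
theorem mlen_pow (m : ThompsonM) (a : ℕ) : mlen (m ^ a) = a * mlen m := by
  simp [mlen]

@[simp]
theorem mlen_shiftM (m : ThompsonM) : mlen (shiftM m) = mlen m := by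
  induction m using induction_on with
  | one => rw [map_one]
  | xM_mul b m ih => rw [map_mul, mlen_mul, mlen_mul, ih, shiftM_xM, mlen_xM, mlen_xM]

theorem xM_mul_left_cancel {b : ℕ} {p q : ThompsonM} (h : xM b * p = xM b * q) : p = q := by
  induction hn : mlen p + b using Nat.strong_induction_on generalizing b p q with
  | _ n ih =>
  obtain ⟨a, p, rfl⟩ := exists_eq_xM_zero_pow_mul_shiftM p
  obtain ⟨a', q, rfl⟩ := exists_eq_xM_zero_pow_mul_shiftM q
  obtain ⟨⟩ | b := b
  · simp only [← mul_assoc, ← pow_succ', xM_zero_pow_mul_shiftM_inj, add_left_inj] at h ⊢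
    exact h
  · simp only [xM_succ_mul_xM_zero_pow_mul_shiftM, xM_zero_pow_mul_shiftM_inj] at h ⊢
    obtain ⟨rfl, h⟩ := h
    refine ⟨rfl, ih _ ?_ h rfl⟩
    simp only [← hn, mlen_mul, mlen_pow, mlen_xM, mlen_shiftM]
    omega

instance : IsLeftCancelMul ThompsonM where
  mul_left_cancel m := by
    induction m using induction_on with
    | one => intro p q h; simpa only [one_mul] using h
    | xM_mul b m ih =>
      intro p q h
      simp only [mul_assoc] at h
      exact ih (xM_mul_left_cancel h)

theorem Msub_zero : Msub 0 = ⊤ := by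
  refine (Submonoid.eq_top_iff' _).2 fun m => ?_
  induction m using induction_on with
  | one => exact one_mem _
  | xM_mul b m ih => exact mul_mem (Submonoid.subset_closure ⟨b, b.zero_le, rfl⟩) ih

theorem shiftM_mem_Msub {i : ℕ} {m : ThompsonM} (hm : m ∈ Msub i) :
    shiftM m ∈ Msub (i + 1) := by
  induction hm using Submonoid.closure_induction with
  | mem _ hx =>
    obtain ⟨n, hn, rfl⟩ := hx
    exact Submonoid.subset_closure ⟨n + 1, by omega, rfl⟩
  | one => rw [map_one]; exact one_mem _
  | mul _ _ _ _ hx hy => rw [map_mul]; exact mul_mem hx hy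

open MonoidAlgebra

variable {K : Type*} [Field K]

theorem XMa_eq_single (n : ℕ) : XMa K n = single (xM n) 1 := rfl

theorem XMa_zero_pow (a : ℕ) : XMa K 0 ^ a = single (xM 0 ^ a) 1 := by
  rw [XMa, ← map_pow, of_apply]

theorem shiftA_single (m : ThompsonM) (c : K) : shiftA K (single m c) = single (shiftM m) c :=
  mapDomain_single

@[simp]
theorem shiftA_XMa (n : ℕ) : shiftA K (XMa K n) = XMa K (n + 1) := shiftA_single _ _

theorem XMa_mul_XMa_of_lt {i j : ℕ} (h : i < j) :
    XMa K j * XMa K i = XMa K i * XMa K (j + 1) := by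
  simp only [XMa, ← map_mul, xM_mul_xM_of_lt h]

theorem XMa_mul_one_sub_XMa_of_lt {i j : ℕ} (h : i < j) :
    XMa K i * (1 - XMa K (j + 1)) = (1 - XMa K j) * XMa K i := by
  rw [mul_sub, sub_mul, mul_one, one_mul, XMa_mul_XMa_of_lt h]

variable (K) in
/-- `component K a u` collects the monomials `x_0 ^ a * φ p` of `u`, recorded as `p`. -/
noncomputable def component (a : ℕ) : K[ThompsonM] →+ K[ThompsonM] :=
  comapDomainAddMonoidHom _ (xM_zero_pow_mul_shiftM_injective a)

theorem coeff_component (a : ℕ) (u : K[ThompsonM]) (p : ThompsonM) :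
    (component K a u).coeff p = u.coeff (xM 0 ^ a * shiftM p) := rfl

theorem component_single (a e : ℕ) (p : ThompsonM) (c : K) :
    component K a (single (xM 0 ^ e * shiftM p) c) = if e = a then single p c else 0 := by
  split_ifs with h
  · subst h
    exact comapDomain_single_map _ (xM_zero_pow_mul_shiftM_injective e) _ _
  · refine comapDomain_single_of_not_mem_range ?_ (xM_zero_pow_mul_shiftM_injective a)
    rintro ⟨q, hq⟩
    exact h (xM_zero_pow_mul_shiftM_inj.1 hq).1.symm

theorem component_ext {u u' : K[ThompsonM]} (h : ∀ a, component K a u = component K a u') :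
    u = u' := by
  ext g
  obtain ⟨a, p, rfl⟩ := exists_eq_xM_zero_pow_mul_shiftM g
  simpa only [coeff_component] using congr($(h a).coeff p)

theorem component_zero_XMa_zero_mul (u : K[ThompsonM]) : component K 0 (XMa K 0 * u) = 0 := by
  induction u using induction_linear with
  | zero => simp
  | add u u' hu hu' => rw [mul_add, map_add, hu, hu', add_zero]
  | single g c =>
    obtain ⟨e, p, rfl⟩ := exists_eq_xM_zero_pow_mul_shiftM g
    rw [XMa_eq_single, single_mul_single, one_mul, ← mul_assoc, ← pow_succ', component_single,
      if_neg e.succ_ne_zero]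

theorem component_succ_XMa_zero_mul (a : ℕ) (u : K[ThompsonM]) :
    component K (a + 1) (XMa K 0 * u) = component K a u := by
  induction u using induction_linear with
  | zero => simp
  | add u u' hu hu' => rw [mul_add, map_add, map_add, hu, hu']
  | single g c =>
    obtain ⟨e, p, rfl⟩ := exists_eq_xM_zero_pow_mul_shiftM g
    rw [XMa_eq_single, single_mul_single, one_mul, ← mul_assoc, ← pow_succ', component_single,
      component_single]
    simp only [add_left_inj]

theorem component_XMa_succ_mul (a k : ℕ) (u : K[ThompsonM]) :
    component K a (XMa K (k + 1) * u) = XMa K (a + k) * component K a u := by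
  induction u using induction_linear with
  | zero => simp
  | add u u' hu hu' => rw [mul_add, map_add, map_add, hu, hu', mul_add]
  | single g c =>
    obtain ⟨e, p, rfl⟩ := exists_eq_xM_zero_pow_mul_shiftM g
    rw [XMa_eq_single, single_mul_single, one_mul, xM_succ_mul_xM_zero_pow_mul_shiftM,
      component_single, component_single]
    split_ifs with h
    · rw [h, XMa_eq_single, single_mul_single, one_mul, add_comm]
    · rw [mul_zero]

theorem component_XMa_zero_pow_mul_shiftA (a e : ℕ) (q : K[ThompsonM]) :
    component K a (XMa K 0 ^ e * shiftA K q) = if e = a then q else 0 := by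
  induction q using induction_linear with
  | zero => simp
  | add q q' hq hq' => split_ifs at hq hq' ⊢ <;> simp [mul_add, hq, hq']
  | single g c => rw [shiftA_single, XMa_zero_pow, single_mul_single, one_mul, component_single]

theorem component_shiftA (a : ℕ) (q : K[ThompsonM]) :
    component K a (shiftA K q) = if 0 = a then q else 0 := by
  simpa using component_XMa_zero_pow_mul_shiftA a 0 q

variable (K) in
/-- The bound is an integer: a negative bound forces the element to be `0`. -/
noncomputable def lengthLE (d : ℤ) : Submodule K K[ThompsonM] :=
  supported K K {g | (mlen g : ℤ) ≤ d}

theorem mem_lengthLE {d : ℤ} {u : K[ThompsonM]} :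
    u ∈ lengthLE K d ↔ ∀ g ∈ u.coeff.support, (mlen g : ℤ) ≤ d :=
  mem_supported

theorem lengthLE_mono {d d' : ℤ} (h : d ≤ d') : lengthLE K d ≤ lengthLE K d' :=
  supported_mono fun _ hg => le_trans hg h

theorem eq_zero_of_mem_lengthLE_of_neg {d : ℤ} {u : K[ThompsonM]} (hu : u ∈ lengthLE K d)
    (hd : d < 0) : u = 0 := by
  refine coeff_eq_zero.1 (Finsupp.support_eq_empty.1 (Finset.eq_empty_of_forall_notMem ?_))
  intro g hg
  have := mem_lengthLE.1 hu g hg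
  omega

theorem mem_lengthLE_mdeg (u : K[ThompsonM]) : u ∈ lengthLE K (mdeg u) :=
  mem_lengthLE.2 fun _ hg => Int.ofNat_le.2 (Finset.le_sup hg)

theorem XMa_mul_mem_lengthLE {d : ℤ} {u : K[ThompsonM]} (hu : u ∈ lengthLE K d) (b : ℕ) :
    XMa K b * u ∈ lengthLE K (d + 1) := by
  classical
  refine mem_lengthLE.2 fun g hg => ?_
  obtain ⟨t, ht, rfl⟩ := Finset.mem_image.1 (support_coeff_single_mul_subset u 1 (xM b) hg)
  have := mem_lengthLE.1 hu t ht
  simp only [mlen_mul, mlen_xM]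
  omega

theorem one_sub_XMa_mul_mem_lengthLE {d : ℤ} {u : K[ThompsonM]} (hu : u ∈ lengthLE K d)
    (b : ℕ) : (1 - XMa K b) * u ∈ lengthLE K (d + 1) := by
  rw [sub_mul, one_mul]
  exact sub_mem (lengthLE_mono (by omega) hu) (XMa_mul_mem_lengthLE hu b)

theorem component_mem_lengthLE {d : ℤ} {u : K[ThompsonM]} (hu : u ∈ lengthLE K d) (a : ℕ) :
    component K a u ∈ lengthLE K (d - a) := by
  refine mem_lengthLE.2 fun p hp => ?_
  have := mem_lengthLE.1 hu _ (by simpa [coeff_component] using hp)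
  simp only [mlen_mul, mlen_pow, mlen_xM, mlen_shiftM] at this
  omega

/-- The top monomial `g` of `u` gives the monomial `x_b * g` of `(1 - x_b) u`, because `M` is
left cancellative. -/
theorem mem_lengthLE_of_one_sub_XMa_mul_mem {d : ℤ} {u : K[ThompsonM]} (b : ℕ)
    (hu : (1 - XMa K b) * u ∈ lengthLE K (d + 1)) : u ∈ lengthLE K d := by
  by_contra hud
  obtain ⟨g₀, hg₀, hg₀d⟩ : ∃ g ∈ u.coeff.support, d < mlen g := by
    simpa [mem_lengthLE] using hud
  obtain ⟨g, hg, hmax⟩ := Finset.exists_max_image u.coeff.support mlen ⟨g₀, hg₀⟩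
  have := hmax g₀ hg₀
  have hcoeff : ((1 - XMa K b) * u).coeff (xM b * g) = -u.coeff g := by
    have htop : u.coeff (xM b * g) = 0 :=
      Finsupp.notMem_support_iff.1 fun h => by simpa using hmax _ h
    rw [sub_mul, one_mul, coeff_sub, Finsupp.sub_apply, htop, XMa_eq_single,
      coeff_single_mul_eq_mul_coeff g fun _ _ => mul_right_inj _, one_mul, zero_sub]
  have hlen := mem_lengthLE.1 hu (xM b * g)
    (Finsupp.mem_support_iff.2 (by simpa [hcoeff] using hg))
  simp only [mlen_mul, mlen_xM] at hlen
  omega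

theorem component_zero_one_sub_XMa_zero_mul (u : K[ThompsonM]) :
    component K 0 ((1 - XMa K 0) * u) = component K 0 u := by
  rw [sub_mul, one_mul, map_sub, component_zero_XMa_zero_mul, sub_zero]

theorem component_succ_one_sub_XMa_zero_mul (a : ℕ) (u : K[ThompsonM]) :
    component K (a + 1) ((1 - XMa K 0) * u) = component K (a + 1) u - component K a u := by
  rw [sub_mul, one_mul, map_sub, component_succ_XMa_zero_mul]

theorem component_one_sub_XMa_succ_mul (a k : ℕ) (u : K[ThompsonM]) :
    component K a ((1 - XMa K (k + 1)) * u) = (1 - XMa K (a + k)) * component K a u := by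
  rw [sub_mul, one_mul, map_sub, component_XMa_succ_mul, sub_mul, one_mul]

section Solutions

variable {u v : K[ThompsonM]}

theorem component_zero_of_one_sub_XMa_mul_eq (h : (1 - XMa K 0) * u = (1 - XMa K 1) * v) :
    component K 0 u = (1 - XMa K 0) * component K 0 v := by
  simpa only [component_zero_one_sub_XMa_zero_mul, component_one_sub_XMa_succ_mul] using
    congr(component K 0 $h)

theorem component_succ_of_one_sub_XMa_mul_eq (h : (1 - XMa K 0) * u = (1 - XMa K 1) * v)
    (a : ℕ) :
    component K (a + 1) u - component K a u = (1 - XMa K (a + 1)) * component K (a + 1) v := by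
  simpa only [component_succ_one_sub_XMa_zero_mul, component_one_sub_XMa_succ_mul] using
    congr(component K (a + 1) $h)

end Solutions

variable (K) in
noncomputable def u₀ : K[ThompsonM] := (1 + XMa K 0 - XMa K 1) * (1 - XMa K 3)

theorem one_sub_XMa_zero_mul_u₀ :
    (1 - XMa K 0) * u₀ K = (1 - XMa K 1) * (1 - XMa K 3 - XMa K 0 * (XMa K 0 - XMa K 1)) := by
  have e₁₀ : XMa K 1 * XMa K 0 = XMa K 0 * XMa K 2 := XMa_mul_XMa_of_lt zero_lt_one
  have e₂₀ : XMa K 2 * XMa K 0 = XMa K 0 * XMa K 3 := XMa_mul_XMa_of_lt two_pos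
  have e₂₁ : XMa K 2 * XMa K 1 = XMa K 1 * XMa K 3 := XMa_mul_XMa_of_lt one_lt_two
  have h₁ : XMa K 1 * XMa K 0 * XMa K 0 = XMa K 0 * XMa K 0 * XMa K 3 := by
    rw [e₁₀, mul_assoc, e₂₀, mul_assoc]
  have h₂ : XMa K 1 * XMa K 0 * XMa K 1 = XMa K 0 * XMa K 1 * XMa K 3 := by
    rw [e₁₀, mul_assoc, e₂₁, mul_assoc]
  rw [u₀, ← sub_eq_zero]
  calc _ = (XMa K 0 * XMa K 0 * XMa K 3 - XMa K 1 * XMa K 0 * XMa K 0)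
        - (XMa K 0 * XMa K 1 * XMa K 3 - XMa K 1 * XMa K 0 * XMa K 1) := by noncomm_ring
    _ = 0 := by rw [h₁, h₂, sub_self, sub_self, sub_zero]

theorem component_zero_u₀_mul (w : K[ThompsonM]) :
    component K 0 (u₀ K * w) = (1 - XMa K 0) * ((1 - XMa K 2) * component K 0 w) := by
  rw [u₀, add_sub_right_comm, mul_assoc, add_mul, map_add, component_zero_XMa_zero_mul,
    add_zero, component_one_sub_XMa_succ_mul, component_one_sub_XMa_succ_mul]

theorem component_succ_u₀_mul (a : ℕ) (w : K[ThompsonM]) :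
    component K (a + 1) (u₀ K * w) = (1 - XMa K (a + 1)) *
      ((1 - XMa K (a + 3)) * component K (a + 1) w) + (1 - XMa K (a + 2)) * component K a w := by
  rw [u₀, add_sub_right_comm, mul_assoc, add_mul, map_add, component_succ_XMa_zero_mul,
    component_one_sub_XMa_succ_mul, component_one_sub_XMa_succ_mul,
    component_one_sub_XMa_succ_mul, add_zero]

/-- The components `[R]_n` of the multiplier `R` in `u = u₀ R + (1 - x_1) φ(w)`. -/
noncomputable def coeffSeq (v : K[ThompsonM]) (N n : ℕ) : K[ThompsonM] :=
  if n < N then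
    (1 - XMa K (n + 4)) * coeffSeq v N (n + 2) + XMa K (n + 1) * coeffSeq v N (n + 1)
      - component K (n + 2) v
  else 0
termination_by N - n

section CoeffSeq

variable {v : K[ThompsonM]} {N n : ℕ}

theorem coeffSeq_of_lt (h : n < N) :
    coeffSeq v N n = (1 - XMa K (n + 4)) * coeffSeq v N (n + 2)
      + XMa K (n + 1) * coeffSeq v N (n + 1) - component K (n + 2) v := by
  rw [coeffSeq, if_pos h]

theorem coeffSeq_of_not_lt (h : ¬n < N) : coeffSeq v N n = 0 := by
  rw [coeffSeq, if_neg h]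

theorem coeffSeq_mem_lengthLE (hv : v ∈ lengthLE K N) (n : ℕ) :
    coeffSeq v N n ∈ lengthLE K (N - n - 2) := by
  induction n using coeffSeq.induct N with
  | case1 n hn ih₂ ih₁ =>
    rw [coeffSeq_of_lt hn]
    refine sub_mem (add_mem ?_ ?_) ?_
    · exact lengthLE_mono (by omega) (one_sub_XMa_mul_mem_lengthLE ih₂ _)
    · exact lengthLE_mono (by omega) (XMa_mul_mem_lengthLE ih₁ _)
    · exact lengthLE_mono (by omega) (component_mem_lengthLE hv _)
  | case2 n hn => rw [coeffSeq_of_not_lt hn]; exact zero_mem _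

/-- By `component_succ_u₀_mul`, the right side is `component K (n + 1) (u₀ K * R)` for any `R`
with components `coeffSeq v N`. -/
theorem component_succ_eq_of_one_sub_XMa_mul_eq {u : K[ThompsonM]} (hu : u ∈ lengthLE K N)
    (h : (1 - XMa K 0) * u = (1 - XMa K 1) * v) (n : ℕ) :
    component K (n + 1) u = (1 - XMa K (n + 1)) * ((1 - XMa K (n + 3)) * coeffSeq v N (n + 1))
      + (1 - XMa K (n + 2)) * coeffSeq v N n := by
  induction n using coeffSeq.induct N with
  | case1 n hn _ ih =>
    simp only [add_assoc, Nat.reduceAdd] at ih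
    have hu₁ : component K (n + 1) u
        = component K (n + 2) u - (1 - XMa K (n + 2)) * component K (n + 2) v := by
      rw [← component_succ_of_one_sub_XMa_mul_eq h (n + 1), sub_sub_cancel]
    have key : (1 - XMa K (n + 2)) * (XMa K (n + 1) * coeffSeq v N (n + 1))
        = XMa K (n + 1) * ((1 - XMa K (n + 3)) * coeffSeq v N (n + 1)) := by
      rw [← mul_assoc, ← XMa_mul_one_sub_XMa_of_lt (Nat.lt_succ_self _), mul_assoc]
    rw [hu₁, ih, coeffSeq_of_lt hn, mul_sub, mul_add, key]
    simp only [sub_mul, one_mul]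
    abel
  | case2 n hn =>
    rw [coeffSeq_of_not_lt hn, coeffSeq_of_not_lt (by omega), mul_zero, mul_zero, mul_zero,
      add_zero]
    exact eq_zero_of_mem_lengthLE_of_neg (component_mem_lengthLE hu _) (by omega)

end CoeffSeq

theorem exists_component_eq (r : ℕ → K[ThompsonM]) {N : ℕ} (hr : ∀ n, N ≤ n → r n = 0) :
    ∃ R, ∀ a, component K a R = r a := by
  refine ⟨∑ e ∈ Finset.range N, XMa K 0 ^ e * shiftA K (r e), fun a => ?_⟩
  rw [map_sum]
  simp only [component_XMa_zero_pow_mul_shiftA, Finset.sum_ite_eq', Finset.mem_range]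
  split_ifs with ha
  · rfl
  · exact (hr a (not_lt.1 ha)).symm

theorem eq_of_one_sub_XMa_zero_mul_shiftA_eq {y z : K[ThompsonM]}
    (h : (1 - XMa K 0) * shiftA K y = (1 - XMa K 1) * z) :
    y = (1 - XMa K 1) * -component K 1 z := by
  have h₁ : -y = (1 - XMa K 1) * component K 1 z := by
    simpa [component_succ_one_sub_XMa_zero_mul, component_shiftA,
      component_one_sub_XMa_succ_mul] using congr(component K 1 $h)
  rw [mul_neg, ← h₁, neg_neg]

theorem shiftA_mem_Msub {i : ℕ} {q : K[ThompsonM]}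
    (hq : ∀ g ∈ q.coeff.support, g ∈ Msub i) :
    ∀ g ∈ (shiftA K q).coeff.support, g ∈ Msub (i + 1) := by
  classical
  intro g hg
  obtain ⟨t, ht, rfl⟩ := Finset.mem_image.1 (Finsupp.mapDomain_support hg)
  exact shiftM_mem_Msub (hq t ht)

theorem exists_reduction {u v : K[ThompsonM]} {D : ℕ} (hu : u ∈ lengthLE K D)
    (h : (1 - XMa K 0) * u = (1 - XMa K 1) * v) :
    ∃ R w w', u = u₀ K * R + (1 - XMa K 1) * shiftA K w ∧ w ∈ lengthLE K (D - 1) ∧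
      (1 - XMa K 0) * w = (1 - XMa K 1) * w' := by
  have hv : v ∈ lengthLE K D :=
    mem_lengthLE_of_one_sub_XMa_mul_mem 1 (h ▸ one_sub_XMa_mul_mem_lengthLE hu 0)
  obtain ⟨R, hR⟩ := exists_component_eq (coeffSeq v D) (N := D) fun _ hn =>
    coeffSeq_of_not_lt (by omega)
  set w := component K 0 v - (1 - XMa K 2) * coeffSeq v D 0
  have hw : (1 - XMa K 0) * w
      = component K 0 u - (1 - XMa K 0) * ((1 - XMa K 2) * coeffSeq v D 0) := by
    rw [mul_sub, component_zero_of_one_sub_XMa_mul_eq h]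
  have hrest : u - u₀ K * R = shiftA K ((1 - XMa K 0) * w) := by
    refine component_ext fun a => ?_
    rw [map_sub, component_shiftA]
    cases a with
    | zero => rw [component_zero_u₀_mul, hR, hw, if_pos rfl]
    | succ a =>
      rw [component_succ_u₀_mul, hR, hR, component_succ_eq_of_one_sub_XMa_mul_eq hu h, sub_self,
        if_neg a.succ_ne_zero.symm]
  refine ⟨R, w, -component K 1 (v - (1 - XMa K 3 - XMa K 0 * (XMa K 0 - XMa K 1)) * R),
    ?_, ?_, ?_⟩
  · rw [← sub_eq_iff_eq_add', hrest, map_mul, map_sub, map_one, shiftA_XMa]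
  · refine mem_lengthLE_of_one_sub_XMa_mul_mem 0 ?_
    rw [hw, sub_add_cancel]
    refine sub_mem (lengthLE_mono (by omega) (component_mem_lengthLE hu 0)) ?_
    refine lengthLE_mono (by omega) (one_sub_XMa_mul_mem_lengthLE
      (one_sub_XMa_mul_mem_lengthLE (coeffSeq_mem_lengthLE hv 0) _) _)
  · refine eq_of_one_sub_XMa_zero_mul_shiftA_eq ?_
    rw [← hrest, mul_sub, h, ← mul_assoc, one_sub_XMa_zero_mul_u₀, mul_assoc, ← mul_sub]

end ThompsonM

open ThompsonM

/-- every solution `(u, v)` of `(1-x_0)u = (1-x_1)v` in `K[M]` has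
`u = u_0 r_0 + u_1 r_1 + ⋯ + u_k r_k` for some `k` and `r_i ∈ K[M_i]`, where
`u_0 = (1 + x_0 - x_1)(1 - x_3)` and `u_k = (1-x_1)φ(u_{k-1})`. -/
theorem stmt15 (K : Type*) [Field K] (U : ℕ → MonoidAlgebra K ThompsonM)
    (hU0 : U 0 = (1 + XMa K 0 - XMa K 1) * (1 - XMa K 3))
    (hU : ∀ k : ℕ, U (k + 1) = (1 - XMa K 1) * shiftA K (U k))
    (u v : MonoidAlgebra K ThompsonM)
    (h : (1 - XMa K 0) * u = (1 - XMa K 1) * v) :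
    ∃ (k : ℕ) (r : ℕ → MonoidAlgebra K ThompsonM),
      (∀ i ≤ k, ∀ g ∈ (r i).coeff.support, g ∈ Msub i) ∧
      u = ∑ i ∈ Finset.range (k + 1), U i * r i := by
  obtain ⟨D, hD⟩ : ∃ D : ℕ, u ∈ lengthLE K (D - 1) :=
    ⟨mdeg u + 1, by simpa using mem_lengthLE_mdeg u⟩
  induction D generalizing u v with
  | zero =>
    refine ⟨0, fun _ => 0, by simp, ?_⟩
    simp [eq_zero_of_mem_lengthLE_of_neg hD (by omega)]
  | succ D ih =>
    obtain ⟨R, w, w', hu, hw, hw'⟩ := exists_reduction (by simpa using hD) h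
    obtain ⟨k, r, hr, hw_eq⟩ := ih w w' hw' hw
    refine ⟨k + 1, fun | 0 => R | i + 1 => shiftA K (r i), ?_, ?_⟩
    · rintro (_ | i) hi g hg
      · simp [Msub_zero]
      · exact shiftA_mem_Msub (hr i (by omega)) g hg
    · rw [Finset.sum_range_succ', hu, add_comm, hw_eq, map_sum, Finset.mul_sum, hU0]
      congr 1
      exact Finset.sum_congr rfl fun i _ => by rw [hU, map_mul, mul_assoc]
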